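/- arXiv:2206.12855 — 2 statements merged into one kernel-verified Lean document; each statement's English description precedes it below -/
import Mathlib

section
/- In a strongly unital category satisfying the condition that every morphism with zero kernel is a monomorphism, if k : X → A and l : Y → A are Bourn-normal monomorphisms whose pullback is a zero object, then k and l Huq-commute and their cooperator φ : X × Y → A is a monomorphism which is the join of k and l in the poset of subobjects of A. -/
/-!
Let `R` and `S` be the equivalence relations on `A` with zero classes `k` and `l`. The
intersection `R ∩ S` has zero class `X ∩ Y = 0`, so by hypothesis its second leg is a
monomorphism; a reflexive relation with a monic leg is discrete, hence `R ∩ S = Δ_A`.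

Let `G = {(a, x, y) | a R l(y), a S k(x)}`. Discreteness of `R ∩ S` makes both projections
`G → X × Y` and `G → A` monic (for the second one because `l(y) S 0` and `k(x) R 0`).
The injections of `X × Y` factor through `G` via `x ↦ (k(x), x, 0)` and `y ↦ (l(y), 0, y)`,
so by unitality `G → X × Y` is an isomorphism, and `φ` is its inverse followed by `G → A`.
-/

open CategoryTheory CategoryTheory.Limits

universe v u

noncomputable section

variable {C : Type u} [Category.{v} C]

/-- A pair of morphisms with common codomain is jointly strongly epimorphic:
it has the lifting property against all monomorphisms. -/
def JointlyStrongEpi {X Y Z : C} (f : X ⟶ Z) (g : Y ⟶ Z) : Prop :=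
  ∀ {U V : C} (m : U ⟶ V) (_ : Mono m) (h : Z ⟶ V) (u : X ⟶ U) (v : Y ⟶ U),
    u ≫ m = f ≫ h → v ≫ m = g ≫ h → ∃ t : Z ⟶ U, t ≫ m = h

variable (C) in
/-- A unital category: pointed, finitely complete, and the product inclusions
`⟨1,0⟩ : X → X × Y` and `⟨0,1⟩ : Y → X × Y` are jointly strongly epimorphic. -/
class Unital [HasZeroObject C] [HasZeroMorphisms C] [HasFiniteLimits C] : Prop where
  jse : ∀ X Y : C, JointlyStrongEpi (prod.lift (𝟙 X) (0 : X ⟶ Y)) (prod.lift (0 : Y ⟶ X) (𝟙 Y))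

/-- `f : X ⟶ A` and `g : Y ⟶ A` Huq-commute: there is a cooperator
`φ : X × Y ⟶ A` with `φ∘⟨1,0⟩ = f` and `φ∘⟨0,1⟩ = g`. -/
def HuqCommute [HasZeroMorphisms C] [HasFiniteLimits C] {X Y A : C} (f : X ⟶ A) (g : Y ⟶ A) : Prop :=
  ∃ φ : X ⨯ Y ⟶ A, prod.lift (𝟙 X) 0 ≫ φ = f ∧ prod.lift 0 (𝟙 Y) ≫ φ = g

variable [HasZeroMorphisms C] [HasFiniteLimits C]

/-- `(r₁, r₂) : R ⇉ A` is an internal equivalence relation. -/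
structure IsEquivRelation {R A : C} (r₁ r₂ : R ⟶ A) : Prop where
  mono : Mono (prod.lift r₁ r₂)
  refl : ∃ e : A ⟶ R, e ≫ r₁ = 𝟙 A ∧ e ≫ r₂ = 𝟙 A
  symm : ∃ σ : R ⟶ R, σ ≫ r₁ = r₂ ∧ σ ≫ r₂ = r₁
  trans : ∃ τ : pullback r₂ r₁ ⟶ R,
    τ ≫ r₁ = pullback.fst r₂ r₁ ≫ r₁ ∧ τ ≫ r₂ = pullback.snd r₂ r₁ ≫ r₂

/-- A monomorphism `k : X ⟶ A` is Bourn-normal if it is the zero class of some internal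
equivalence relation on `A`, i.e. `k` is the pullback of the relation's pairing
`⟨r₁,r₂⟩ : R → A × A` along `⟨1,0⟩ : A → A × A`. -/
def BournNormal {X A : C} (k : X ⟶ A) : Prop :=
  Mono k ∧ ∃ (R : C) (r₁ r₂ : R ⟶ A) (_ : IsEquivRelation r₁ r₂) (κ : X ⟶ R),
    IsPullback κ k (prod.lift r₁ r₂) (prod.lift (𝟙 A) 0)

variable (C) in
/-- A strongly unital category: pointed, finitely complete, and for every object `X` the
morphisms `⟨1,0⟩ : X → X × X` and the diagonal `⟨1,1⟩ : X → X × X` are jointly strongly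
epimorphic (this entails unitality). -/
class StronglyUnital [HasZeroObject C] : Prop where
  jse : ∀ X Y : C, JointlyStrongEpi (prod.lift (𝟙 X) (0 : X ⟶ Y)) (prod.lift (0 : Y ⟶ X) (𝟙 Y))
  jse' : ∀ X : C, JointlyStrongEpi (prod.lift (𝟙 X) (0 : X ⟶ X)) (prod.lift (𝟙 X) (𝟙 X))

end

attribute [local simp] prod.lift_fst prod.lift_snd prod.lift_fst_assoc prod.lift_snd_assoc
  pullback.lift_fst pullback.lift_snd pullback.lift_fst_assoc pullback.lift_snd_assoc

section Relations

variable {C : Type u} [Category.{v} C] {R A W : C}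

def Related (r₁ r₂ : R ⟶ A) (a b : W ⟶ A) : Prop :=
  ∃ ρ : W ⟶ R, ρ ≫ r₁ = a ∧ ρ ≫ r₂ = b

theorem eq_of_mono_of_comp_eq_id {r₁ r₂ : R ⟶ A} [Mono r₂] {e : A ⟶ R} (he₁ : e ≫ r₁ = 𝟙 A)
    (he₂ : e ≫ r₂ = 𝟙 A) : r₁ = r₂ := by
  have hre : r₂ ≫ e = 𝟙 R := by
    rw [← cancel_mono r₂, Category.assoc, he₂, Category.id_comp, Category.comp_id]
  rw [← Category.id_comp r₁, ← hre, Category.assoc, he₁, Category.comp_id]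

variable [HasFiniteLimits C] {S : C} {r₁ r₂ : R ⟶ A} {s₁ s₂ : S ⟶ A}

namespace IsEquivRelation

theorem related_refl (h : IsEquivRelation r₁ r₂) (a : W ⟶ A) : Related r₁ r₂ a a := by
  obtain ⟨e, he₁, he₂⟩ := h.refl
  exact ⟨a ≫ e, by simp [he₁], by simp [he₂]⟩

theorem related_symm (h : IsEquivRelation r₁ r₂) {a b : W ⟶ A} :
    Related r₁ r₂ a b → Related r₁ r₂ b a := by
  rintro ⟨ρ, rfl, rfl⟩
  obtain ⟨σ, hσ₁, hσ₂⟩ := h.symm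
  exact ⟨ρ ≫ σ, by simp [hσ₁], by simp [hσ₂]⟩

theorem related_trans (h : IsEquivRelation r₁ r₂) {a b c : W ⟶ A} :
    Related r₁ r₂ a b → Related r₁ r₂ b c → Related r₁ r₂ a c := by
  rintro ⟨ρ, rfl, hρ⟩ ⟨ρ', hρ', rfl⟩
  obtain ⟨τ, hτ₁, hτ₂⟩ := h.trans
  exact ⟨pullback.lift ρ ρ' (hρ.trans hρ'.symm) ≫ τ, by simp [hτ₁], by simp [hτ₂]⟩

theorem hom_ext (h : IsEquivRelation r₁ r₂) {ρ ρ' : W ⟶ R} (h₁ : ρ ≫ r₁ = ρ' ≫ r₁)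
    (h₂ : ρ ≫ r₂ = ρ' ≫ r₂) : ρ = ρ' := by
  have := h.mono
  rw [← cancel_mono (prod.lift r₁ r₂)]
  ext <;> simpa

end IsEquivRelation

theorem pullback_prod_lift_condition :
    pullback.fst (prod.lift r₁ r₂) (prod.lift s₁ s₂) ≫ r₁ =
        pullback.snd (prod.lift r₁ r₂) (prod.lift s₁ s₂) ≫ s₁ ∧
      pullback.fst (prod.lift r₁ r₂) (prod.lift s₁ s₂) ≫ r₂ =
        pullback.snd (prod.lift r₁ r₂) (prod.lift s₁ s₂) ≫ s₂ := by
  have hc := pullback.condition (f := prod.lift r₁ r₂) (g := prod.lift s₁ s₂)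
  exact ⟨by simpa using hc =≫ prod.fst, by simpa using hc =≫ prod.snd⟩

theorem related_inter_iff {a b : W ⟶ A} :
    Related (pullback.fst (prod.lift r₁ r₂) (prod.lift s₁ s₂) ≫ r₁)
      (pullback.fst (prod.lift r₁ r₂) (prod.lift s₁ s₂) ≫ r₂) a b ↔
      Related r₁ r₂ a b ∧ Related s₁ s₂ a b := by
  obtain ⟨hc₁, hc₂⟩ := pullback_prod_lift_condition (r₁ := r₁) (r₂ := r₂) (s₁ := s₁) (s₂ := s₂)
  constructor
  · rintro ⟨w, rfl, rfl⟩
    exact ⟨⟨w ≫ pullback.fst _ _, by simp, by simp⟩,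
      ⟨w ≫ pullback.snd _ _, by simp [hc₁], by simp [hc₂]⟩⟩
  · rintro ⟨⟨ρ, rfl, rfl⟩, ⟨σ, hσ₁, hσ₂⟩⟩
    exact ⟨pullback.lift ρ σ (by ext <;> simp [hσ₁, hσ₂]), by simp, by simp⟩

theorem IsEquivRelation.inter_hom_ext (hR : IsEquivRelation r₁ r₂) (hS : IsEquivRelation s₁ s₂)
    {w w' : W ⟶ pullback (prod.lift r₁ r₂) (prod.lift s₁ s₂)}
    (h₁ : w ≫ pullback.fst _ _ ≫ r₁ = w' ≫ pullback.fst _ _ ≫ r₁)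
    (h₂ : w ≫ pullback.fst _ _ ≫ r₂ = w' ≫ pullback.fst _ _ ≫ r₂) : w = w' := by
  obtain ⟨hc₁, hc₂⟩ := pullback_prod_lift_condition (r₁ := r₁) (r₂ := r₂) (s₁ := s₁) (s₂ := s₂)
  apply pullback.hom_ext
  · exact hR.hom_ext (by simpa using h₁) (by simpa using h₂)
  · exact hS.hom_ext (by simpa [← hc₁] using h₁) (by simpa [← hc₂] using h₂)

end Relations

section ZeroClass

variable {C : Type u} [Category.{v} C] [HasZeroMorphisms C] [HasFiniteLimits C]
  {R S X Y A W : C} {r₁ r₂ : R ⟶ A} {s₁ s₂ : S ⟶ A} {κ : X ⟶ R} {μ : Y ⟶ S}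
  {k : X ⟶ A} {l : Y ⟶ A}

abbrev IsZeroClass (κ : X ⟶ R) (k : X ⟶ A) (r₁ r₂ : R ⟶ A) : Prop :=
  IsPullback κ k (prod.lift r₁ r₂) (prod.lift (𝟙 A) 0)

theorem IsZeroClass.related_zero_iff (hκ : IsZeroClass κ k r₁ r₂) {a : W ⟶ A} :
    Related r₁ r₂ a 0 ↔ ∃ x : W ⟶ X, x ≫ k = a := by
  constructor
  · rintro ⟨ρ, rfl, hρ⟩
    have hw : ρ ≫ prod.lift r₁ r₂ = (ρ ≫ r₁) ≫ prod.lift (𝟙 A) 0 := by ext <;> simp [hρ]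
    exact ⟨hκ.lift ρ _ hw, hκ.lift_snd ρ _ hw⟩
  · rintro ⟨x, rfl⟩
    refine ⟨x ≫ κ, ?_, ?_⟩
    · simpa using x ≫= congrArg (· ≫ prod.fst) hκ.w
    · simpa using x ≫= congrArg (· ≫ prod.snd) hκ.w

theorem IsZeroClass.eq_zero_of_related (hκ : IsZeroClass κ k r₁ r₂)
    (hμ : IsZeroClass μ l s₁ s₂) (hmeet : IsZero (pullback k l)) {a : W ⟶ A}
    (hr : Related r₁ r₂ a 0) (hs : Related s₁ s₂ a 0) : a = 0 := by
  obtain ⟨x, rfl⟩ := hκ.related_zero_iff.mp hr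
  obtain ⟨y, hy⟩ := hμ.related_zero_iff.mp hs
  have : pullback.lift x y hy.symm = 0 := hmeet.eq_of_tgt _ _
  have hx : x = 0 := by simpa using this =≫ pullback.fst k l
  rw [hx, zero_comp]

theorem eq_of_related_of_related (hcond : ∀ {A B : C} (f : A ⟶ B), IsZero (kernel f) → Mono f)
    (hR : IsEquivRelation r₁ r₂) (hS : IsEquivRelation s₁ s₂) (hκ : IsZeroClass κ k r₁ r₂)
    (hμ : IsZeroClass μ l s₁ s₂) (hmeet : IsZero (pullback k l)) {a b : W ⟶ A}
    (hr : Related r₁ r₂ a b) (hs : Related s₁ s₂ a b) : a = b := by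
  set e₂ := pullback.fst (prod.lift r₁ r₂) (prod.lift s₁ s₂) ≫ r₂
  have : Mono e₂ := by
    refine hcond e₂ (IsZero.of_mono_eq_zero _ (hR.inter_hom_ext hS (w := kernel.ι e₂) (w' := 0) ?_
      (by rw [zero_comp]; exact kernel.condition e₂)))
    obtain ⟨hr', hs'⟩ := related_inter_iff.mp ⟨kernel.ι e₂, rfl, kernel.condition e₂⟩
    simpa using hκ.eq_zero_of_related hμ hmeet hr' hs'
  obtain ⟨e, he₁, he₂⟩ := related_inter_iff.mpr ⟨hR.related_refl (𝟙 A), hS.related_refl (𝟙 A)⟩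
  obtain ⟨w, rfl, rfl⟩ := related_inter_iff.mpr ⟨hr, hs⟩
  rw [eq_of_mono_of_comp_eq_id he₁ he₂]

end ZeroClass

section Graph

variable {C : Type u} [Category.{v} C] [HasFiniteLimits C] {R S X Y A W : C}
  (r₁ r₂ : R ⟶ A) (s₁ s₂ : S ⟶ A) (k : X ⟶ A) (l : Y ⟶ A)

/-- The object of triples `(a, x, y)` with `a R l(y)` and `a S k(x)`: the graph of the
cooperator of `k` and `l`. -/
noncomputable abbrev cooperatorGraph : C :=
  pullback (prod.map (prod.lift r₁ r₂) (prod.lift s₁ s₂))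
    (prod.lift (prod.lift prod.fst (prod.snd ≫ prod.snd ≫ l))
      (prod.lift prod.fst (prod.snd ≫ prod.fst ≫ k)))

noncomputable def cooperatorGraph.ι : cooperatorGraph r₁ r₂ s₁ s₂ k l ⟶ A ⨯ (X ⨯ Y) :=
  pullback.snd _ _

variable {r₁ r₂ s₁ s₂ k l}

theorem cooperatorGraph.related (g : W ⟶ cooperatorGraph r₁ r₂ s₁ s₂ k l) :
    Related r₁ r₂ (g ≫ ι r₁ r₂ s₁ s₂ k l ≫ prod.fst)
        ((g ≫ ι r₁ r₂ s₁ s₂ k l ≫ prod.snd ≫ prod.snd) ≫ l) ∧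
      Related s₁ s₂ (g ≫ ι r₁ r₂ s₁ s₂ k l ≫ prod.fst)
        ((g ≫ ι r₁ r₂ s₁ s₂ k l ≫ prod.snd ≫ prod.fst) ≫ k) := by
  have hc := g ≫= pullback.condition (f := prod.map (prod.lift r₁ r₂) (prod.lift s₁ s₂))
    (g := prod.lift (prod.lift prod.fst (prod.snd ≫ prod.snd ≫ l))
      (prod.lift prod.fst (prod.snd ≫ prod.fst ≫ k)))
  exact ⟨⟨g ≫ pullback.fst _ _ ≫ prod.fst, by simpa [ι] using hc =≫ prod.fst ≫ prod.fst,
      by simpa [ι] using hc =≫ prod.fst ≫ prod.snd⟩,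
    ⟨g ≫ pullback.fst _ _ ≫ prod.snd, by simpa [ι] using hc =≫ prod.snd ≫ prod.fst,
      by simpa [ι] using hc =≫ prod.snd ≫ prod.snd⟩⟩

theorem cooperatorGraph.exists_lift {a : W ⟶ A} {x : W ⟶ X} {y : W ⟶ Y}
    (hr : Related r₁ r₂ a (y ≫ l)) (hs : Related s₁ s₂ a (x ≫ k)) :
    ∃ g : W ⟶ cooperatorGraph r₁ r₂ s₁ s₂ k l,
      g ≫ ι r₁ r₂ s₁ s₂ k l ≫ prod.fst = a ∧
        g ≫ ι r₁ r₂ s₁ s₂ k l ≫ prod.snd = prod.lift x y := by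
  obtain ⟨ρ, hρ₁, hρ₂⟩ := hr
  obtain ⟨σ, hσ₁, hσ₂⟩ := hs
  exact ⟨pullback.lift (prod.lift ρ σ) (prod.lift a (prod.lift x y))
    (by ext <;> simp [hρ₁, hρ₂, hσ₁, hσ₂]), by simp [ι], by simp [ι]⟩

instance cooperatorGraph.mono_ι [Mono (prod.lift r₁ r₂)] [Mono (prod.lift s₁ s₂)] :
    Mono (ι r₁ r₂ s₁ s₂ k l) := by
  unfold ι
  infer_instance

theorem cooperatorGraph.mono_ι_snd (hR : IsEquivRelation r₁ r₂) (hS : IsEquivRelation s₁ s₂)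
    (hdisc : ∀ {W : C} {a b : W ⟶ A}, Related r₁ r₂ a b → Related s₁ s₂ a b → a = b) :
    Mono (ι r₁ r₂ s₁ s₂ k l ≫ prod.snd) := by
  have := hR.mono
  have := hS.mono
  refine ⟨fun g₁ g₂ h => ?_⟩
  obtain ⟨hr₁, hs₁⟩ := related g₁
  obtain ⟨hr₂, hs₂⟩ := related g₂
  rw [reassoc_of% h] at hr₁ hs₁
  rw [← cancel_mono (ι r₁ r₂ s₁ s₂ k l)]
  ext <;> simp only [Category.assoc]
  · exact hdisc (hR.related_trans hr₁ (hR.related_symm hr₂))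
      (hS.related_trans hs₁ (hS.related_symm hs₂))
  · simpa using h =≫ prod.fst
  · simpa using h =≫ prod.snd

variable [HasZeroMorphisms C] {κ : X ⟶ R} {μ : Y ⟶ S}

theorem IsZeroClass.eq_of_related (hμ : IsZeroClass μ l s₁ s₂) [Mono l]
    (hR : IsEquivRelation r₁ r₂) (hS : IsEquivRelation s₁ s₂)
    (hdisc : ∀ {W : C} {a b : W ⟶ A}, Related r₁ r₂ a b → Related s₁ s₂ a b → a = b)
    {a : W ⟶ A} {y₁ y₂ : W ⟶ Y} (h₁ : Related r₁ r₂ a (y₁ ≫ l))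
    (h₂ : Related r₁ r₂ a (y₂ ≫ l)) : y₁ = y₂ := by
  rw [← cancel_mono l]
  exact hdisc (hR.related_trans (hR.related_symm h₁) h₂)
    (hS.related_trans (hμ.related_zero_iff.mpr ⟨y₁, rfl⟩)
      (hS.related_symm (hμ.related_zero_iff.mpr ⟨y₂, rfl⟩)))

theorem cooperatorGraph.mono_ι_fst [Mono k] [Mono l] (hR : IsEquivRelation r₁ r₂)
    (hS : IsEquivRelation s₁ s₂) (hκ : IsZeroClass κ k r₁ r₂) (hμ : IsZeroClass μ l s₁ s₂)
    (hdisc : ∀ {W : C} {a b : W ⟶ A}, Related r₁ r₂ a b → Related s₁ s₂ a b → a = b) :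
    Mono (ι r₁ r₂ s₁ s₂ k l ≫ prod.fst) := by
  have := hR.mono
  have := hS.mono
  refine ⟨fun g₁ g₂ h => ?_⟩
  obtain ⟨hr₁, hs₁⟩ := related g₁
  obtain ⟨hr₂, hs₂⟩ := related g₂
  rw [h] at hr₁ hs₁
  rw [← cancel_mono (ι r₁ r₂ s₁ s₂ k l)]
  ext <;> simp only [Category.assoc]
  · exact h
  · exact hκ.eq_of_related hS hR (fun hs hr => hdisc hr hs) hs₁ hs₂
  · exact hμ.eq_of_related hR hS hdisc hr₁ hr₂

end Graph

section Unital

variable {C : Type u} [Category.{v} C] [HasZeroObject C] [HasZeroMorphisms C]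
  [HasFiniteLimits C]

instance StronglyUnital.unital [StronglyUnital C] : Unital C :=
  ⟨StronglyUnital.jse⟩

theorem Unital.exists_mono_cooperator [Unital C] {G X Y A : C} (p : G ⟶ X ⨯ Y) (q : G ⟶ A)
    [Mono p] [Mono q] {u : X ⟶ G} {v : Y ⟶ G} (hu : u ≫ p = prod.lift (𝟙 X) 0)
    (hv : v ≫ p = prod.lift 0 (𝟙 Y)) :
    ∃ φ : X ⨯ Y ⟶ A,
      prod.lift (𝟙 X) 0 ≫ φ = u ≫ q ∧ prod.lift 0 (𝟙 Y) ≫ φ = v ≫ q ∧ Mono φ ∧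
      (∀ {M : C} (m : M ⟶ A), Mono m → (∃ x : X ⟶ M, x ≫ m = u ≫ q) →
        (∃ y : Y ⟶ M, y ≫ m = v ≫ q) → ∃ t : X ⨯ Y ⟶ M, t ≫ m = φ) := by
  obtain ⟨t, ht⟩ := Unital.jse X Y p ‹_› (𝟙 _) u v (by simpa) (by simpa)
  have : IsSplitEpi p := IsSplitEpi.mk' ⟨t, ht⟩
  have : IsIso p := isIso_of_mono_of_isSplitEpi p
  refine ⟨inv p ≫ q, by simp [← hu], by simp [← hv], inferInstance, ?_⟩
  rintro M m hm ⟨x, hx⟩ ⟨y, hy⟩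
  exact Unital.jse X Y m hm _ x y (by simp [hx, ← hu]) (by simp [hy, ← hv])

end Unital

variable {C : Type u} [Category.{v} C]

variable [HasZeroMorphisms C] [HasFiniteLimits C]

/-- In a strongly unital category in which every morphism with zero kernel is a
monomorphism, Bourn-normal monomorphisms `k, l` with the same codomain and zero pullback
Huq-commute, and their cooperator is a monomorphism which is the join of `k` and `l`
in the subobjects of `A`. -/
theorem stmt14 [HasZeroObject C] [StronglyUnital C]
    (hcond : ∀ {A B : C} (f : A ⟶ B), IsZero (kernel f) → Mono f)
    {X Y A : C} (k : X ⟶ A) (l : Y ⟶ A)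
    (hk : BournNormal k) (hl : BournNormal l)
    (hmeet : IsZero (pullback k l)) :
    ∃ φ : X ⨯ Y ⟶ A,
      prod.lift (𝟙 X) 0 ≫ φ = k ∧ prod.lift 0 (𝟙 Y) ≫ φ = l ∧ Mono φ ∧
      (∀ {M : C} (m : M ⟶ A), Mono m → (∃ x : X ⟶ M, x ≫ m = k) →
        (∃ y : Y ⟶ M, y ≫ m = l) → ∃ t : X ⨯ Y ⟶ M, t ≫ m = φ) := by
  obtain ⟨_, R, r₁, r₂, hR, κ, hκ⟩ := hk
  obtain ⟨_, S, s₁, s₂, hS, μ, hμ⟩ := hl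
  have hdisc {W : C} {a b : W ⟶ A} : Related r₁ r₂ a b → Related s₁ s₂ a b → a = b :=
    eq_of_related_of_related hcond hR hS hκ hμ hmeet
  have := cooperatorGraph.mono_ι_fst hR hS hκ hμ hdisc
  have := cooperatorGraph.mono_ι_snd (k := k) (l := l) hR hS hdisc
  obtain ⟨u, huq, hup⟩ := cooperatorGraph.exists_lift (s₁ := s₁) (s₂ := s₂) (x := 𝟙 X) (y := 0)
    (by simpa using (IsZeroClass.related_zero_iff hκ).mpr ⟨𝟙 X, Category.id_comp k⟩)
    (by simpa using hS.related_refl k)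
  obtain ⟨v, hvq, hvp⟩ := cooperatorGraph.exists_lift (r₁ := r₁) (r₂ := r₂) (x := 0) (y := 𝟙 Y)
    (by simpa using hR.related_refl l)
    (by simpa using (IsZeroClass.related_zero_iff hμ).mpr ⟨𝟙 Y, Category.id_comp l⟩)
  simpa [huq, hvq] using
    Unital.exists_mono_cooperator _ (cooperatorGraph.ι r₁ r₂ s₁ s₂ k l ≫ prod.fst) hup hvp
end

section
/- In a strongly unital category satisfying the condition that every morphism with zero kernel is a monomorphism, an object X is abelian if and only if the diagonal ⟨1,1⟩ : X → X × X is a Bourn-normal monomorphism. -/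
open CategoryTheory CategoryTheory.Limits

universe v u

noncomputable section
variable {C : Type u} [Category.{v} C]

variable [HasZeroMorphisms C] [HasFiniteLimits C]

/-!
If `φ` is a cooperator of `1_X` with itself, `m = ⟨φ, π₂⟩ : X × X → X × X` has zero kernel, so it
is a monomorphism; it sends `⟨1,0⟩` to `⟨1,0⟩` and `⟨0,1⟩` to the diagonal, so strong unitality
makes it an isomorphism. The diagonal is then, like `⟨0,1⟩`, a kernel (of `m⁻¹` followed by `π₁`),
and a kernel of `f` is the zero class of the kernel pair of `f`.

Conversely, let the diagonal be the zero class of a reflexive relation `r₁, r₂ : R ⇉ X × X`. On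
`P = {(ρ, y) | r₂ ρ = (0, y)}` the map `(ρ, y) ↦ (π₁ (r₁ ρ), y)` has zero kernel: if it kills
`(ρ, y)` then `r₂ ρ = 0`, so `r₁ ρ` lies on the diagonal with first coordinate `0`, and `ρ = 0`.
Both product injections factor through it, so by unitality it is an isomorphism, and
`(x, y) ↦ π₂ (r₁ ρ)`, for the corresponding `(ρ, y)`, is a cooperator.
-/

attribute [local simp] prod.lift_fst prod.lift_snd prod.lift_fst_assoc prod.lift_snd_assoc
  pullback.lift_fst pullback.lift_snd pullback.lift_fst_assoc pullback.lift_snd_assoc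

variable (C) in
def MonoOfZeroKernel : Prop :=
  ∀ {A B : C} (f : A ⟶ B), IsZero (kernel f) → Mono f

theorem MonoOfZeroKernel.mono_of_cancel_zero (hC : MonoOfZeroKernel C) {A B : C} (f : A ⟶ B)
    (hf : ∀ {T : C} (g : T ⟶ A), g ≫ f = 0 → g = 0) : Mono f :=
  hC f (IsZero.of_mono_eq_zero _ (hf _ (kernel.condition f)))

theorem JointlyStrongEpi.isIso_of_mono {D : Type*} [Category D] {X Y Z U : D} {f : X ⟶ Z}
    {g : Y ⟶ Z} (h : JointlyStrongEpi f g) (m : U ⟶ Z) [Mono m] {u : X ⟶ U} {v : Y ⟶ U}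
    (hu : u ≫ m = f) (hv : v ≫ m = g) : IsIso m := by
  obtain ⟨t, ht⟩ := h m inferInstance (𝟙 Z) u v (by simpa) (by simpa)
  have : IsSplitEpi m := ⟨⟨t, ht⟩⟩
  exact isIso_of_mono_of_isSplitEpi m

theorem isEquivRelation_kernelPair {D : Type*} [Category D] [HasFiniteLimits D] {A B : D}
    (f : A ⟶ B) :
    IsEquivRelation (pullback.fst f f) (pullback.snd f f) where
  mono := ⟨fun a b h => pullback.hom_ext (by simpa using h =≫ prod.fst)
    (by simpa using h =≫ prod.snd)⟩
  refl := ⟨pullback.lift (𝟙 A) (𝟙 A) rfl, by simp, by simp⟩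
  symm := ⟨pullback.lift (pullback.snd f f) (pullback.fst f f) pullback.condition.symm,
    by simp, by simp⟩
  trans := ⟨pullback.lift (pullback.fst _ _ ≫ pullback.fst f f)
    (pullback.snd _ _ ≫ pullback.snd f f)
    (by simp only [Category.assoc, pullback.condition, pullback.condition_assoc]), by simp, by simp⟩

theorem bournNormal_of_isLimit_kernelFork {K A B : C} {k : K ⟶ A} {f : A ⟶ B} {w : k ≫ f = 0}
    (hk : IsLimit (KernelFork.ofι k w)) : BournNormal k := by
  have : Mono k := Fork.IsLimit.mono hk
  let κ : K ⟶ pullback f f := pullback.lift k 0 (by simp [w])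
  have hκ : κ ≫ prod.lift (pullback.fst f f) (pullback.snd f f) = k ≫ prod.lift (𝟙 A) 0 := by
    ext <;> simp [κ]
  refine ⟨this, pullback f f, pullback.fst f f, pullback.snd f f, isEquivRelation_kernelPair f, κ,
    IsPullback.of_isLimit (PullbackCone.IsLimit.mk hκ
      (fun s => (KernelFork.IsLimit.lift' hk s.snd ?_).1) (fun s => ?_)
      (fun s => (KernelFork.IsLimit.lift' hk s.snd _).2)
      (fun s m _ hm => by
        rw [← cancel_mono k, hm]
        exact (KernelFork.IsLimit.lift' hk s.snd _).2.symm))⟩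
  all_goals
    have h₁ : s.fst ≫ pullback.fst f f = s.snd := by simpa using s.condition =≫ prod.fst
    have h₂ : s.fst ≫ pullback.snd f f = 0 := by simpa using s.condition =≫ prod.snd
  · rw [← h₁, Category.assoc, pullback.condition, ← Category.assoc, h₂, zero_comp]
  · exact pullback.hom_ext (by simpa [κ, h₁] using (KernelFork.IsLimit.lift' hk s.snd _).2)
      (by simp [κ, h₂])

def isKernelProdLiftZeroId (X Y : C) :
    IsLimit (KernelFork.ofι (prod.lift (0 : Y ⟶ X) (𝟙 Y)) (prod.lift_fst _ _) :
      KernelFork (prod.fst : X ⨯ Y ⟶ X)) :=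
  KernelFork.IsLimit.ofι' _ _ (fun g hg => ⟨g ≫ prod.snd, by ext <;> simp [hg]⟩)

theorem MonoOfZeroKernel.mono_prod_lift_snd (hC : MonoOfZeroKernel C) {X Y : C}
    {φ : X ⨯ Y ⟶ X} (hφ : prod.lift (𝟙 X) 0 ≫ φ = 𝟙 X) :
    Mono (prod.lift φ (prod.snd : X ⨯ Y ⟶ Y)) := by
  refine hC.mono_of_cancel_zero _ fun g hg => ?_
  have hgφ : g ≫ φ = 0 := by simpa using hg =≫ prod.fst
  have hsnd : g ≫ prod.snd = 0 := by simpa using hg =≫ prod.snd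
  have hg' : g = (g ≫ prod.fst) ≫ prod.lift (𝟙 X) 0 := by ext <;> simp [hsnd]
  have hfst : g ≫ prod.fst = 0 := by
    rw [← Category.comp_id (g ≫ prod.fst), ← hφ, ← Category.assoc, ← hg', hgφ]
  ext <;> simp [hfst, hsnd]

theorem bournNormal_diag_of_huqCommute [HasZeroObject C] [StronglyUnital C]
    (hC : MonoOfZeroKernel C) {X : C} (h : HuqCommute (𝟙 X) (𝟙 X)) : BournNormal (diag X) := by
  obtain ⟨φ, hφ₁, hφ₂⟩ := h
  set m : X ⨯ X ⟶ X ⨯ X := prod.lift φ prod.snd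
  have : Mono m := hC.mono_prod_lift_snd hφ₁
  have hm₁ : prod.lift (𝟙 X) 0 ≫ m = prod.lift (𝟙 X) 0 := by ext <;> simp [m, hφ₁]
  have hm₂ : prod.lift 0 (𝟙 X) ≫ m = diag X := by ext <;> simp [m, hφ₂]
  have : IsIso m := JointlyStrongEpi.isIso_of_mono (StronglyUnital.jse' X) m hm₁ hm₂
  rw [← hm₂]
  exact bournNormal_of_isLimit_kernelFork (KernelFork.isLimitOfIsLimitOfIff
    (isKernelProdLiftZeroId X X) (inv m ≫ prod.fst) (asIso m) (by simp))

def relationComparison {X R : C} (r₁ r₂ : R ⟶ X ⨯ X) : pullback r₂ (prod.lift 0 (𝟙 X)) ⟶ X ⨯ X :=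
  prod.lift (pullback.fst _ _ ≫ r₁ ≫ prod.fst) (pullback.snd _ _)

theorem MonoOfZeroKernel.mono_relationComparison (hC : MonoOfZeroKernel C) {X R : C}
    {r₁ r₂ : R ⟶ X ⨯ X} [Mono (prod.lift r₁ r₂)] {κ : X ⟶ R}
    (hκ : IsPullback κ (diag X) (prod.lift r₁ r₂) (prod.lift (𝟙 _) 0)) :
    Mono (relationComparison r₁ r₂) := by
  refine hC.mono_of_cancel_zero _ fun g hg => ?_
  set ρ := g ≫ pullback.fst r₂ (prod.lift 0 (𝟙 X))
  have hy : g ≫ pullback.snd _ _ = 0 := by simpa [relationComparison] using hg =≫ prod.snd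
  have hx : ρ ≫ r₁ ≫ prod.fst = 0 := by simpa [ρ, relationComparison] using hg =≫ prod.fst
  have hρ₂ : ρ ≫ r₂ = 0 := by
    simp only [ρ, Category.assoc, pullback.condition, reassoc_of% hy, zero_comp]
  obtain ⟨l, hl⟩ : ∃ l, l ≫ diag X = ρ ≫ r₁ :=
    ⟨hκ.lift ρ (ρ ≫ r₁) (by ext <;> simp [hρ₂]), hκ.lift_snd _ _ _⟩
  have hl₀ : l = 0 := by simpa [hx] using hl =≫ prod.fst
  have hρ₁ : ρ ≫ r₁ = 0 := by rw [← hl, hl₀, zero_comp]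
  have hρ : ρ = 0 := by
    rw [← cancel_mono (prod.lift r₁ r₂)]
    ext <;> simp [hρ₁, hρ₂]
  exact pullback.hom_ext (by simpa using hρ) (by simpa using hy)

theorem huqCommute_of_bournNormal_diag [HasZeroObject C] [StronglyUnital C]
    (hC : MonoOfZeroKernel C) {X : C} (h : BournNormal (diag X)) : HuqCommute (𝟙 X) (𝟙 X) := by
  obtain ⟨-, R, r₁, r₂, hR, κ, hκ⟩ := h
  obtain ⟨e, he₁, he₂⟩ := hR.refl
  have := hR.mono
  have hκ₁ : κ ≫ r₁ = diag X := by simpa using hκ.w =≫ prod.fst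
  have hκ₂ : κ ≫ r₂ = 0 := by simpa using hκ.w =≫ prod.snd
  set w := relationComparison r₁ r₂
  have : Mono w := hC.mono_relationComparison hκ
  set u : X ⟶ pullback r₂ (prod.lift 0 (𝟙 X)) := pullback.lift κ 0 (by rw [hκ₂, zero_comp])
  set v : X ⟶ pullback r₂ (prod.lift 0 (𝟙 X)) :=
    pullback.lift (prod.lift 0 (𝟙 X) ≫ e) (𝟙 X) (by simp [he₂])
  have hu : u ≫ w = prod.lift (𝟙 X) 0 := by ext <;> simp [u, w, relationComparison, reassoc_of% hκ₁]
  have hv : v ≫ w = prod.lift 0 (𝟙 X) := by ext <;> simp [v, w, relationComparison, reassoc_of% he₁]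
  have : IsIso w := JointlyStrongEpi.isIso_of_mono (StronglyUnital.jse X X) w hu hv
  refine ⟨inv w ≫ pullback.fst _ _ ≫ r₁ ≫ prod.snd, ?_, ?_⟩
  · rw [← reassoc_of% ((IsIso.eq_comp_inv w).2 hu)]
    simp [u, reassoc_of% hκ₁]
  · rw [← reassoc_of% ((IsIso.eq_comp_inv w).2 hv)]
    simp [v, reassoc_of% he₁]

/-- In a strongly unital category in which every morphism with zero kernel is a
monomorphism, an object `X` is abelian (i.e. `1_X` Huq-commutes with itself) iff the
diagonal `⟨1,1⟩ : X → X × X` is a Bourn-normal monomorphism. -/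
theorem stmt16 [HasZeroObject C] [StronglyUnital C]
    (hcond : ∀ {A B : C} (f : A ⟶ B), IsZero (kernel f) → Mono f) (X : C) :
    HuqCommute (𝟙 X) (𝟙 X) ↔ BournNormal (prod.lift (𝟙 X) (𝟙 X)) :=
  ⟨bournNormal_diag_of_huqCommute hcond, huqCommute_of_bournNormal_diag hcond⟩
end
end
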